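/- Suppose the kernel functions K_1,…,K_n are singular and J is an arbitrary n-field function. If y ∈ S̄ satisfies 0 < y_1 and y_n < 1 (so all coordinates lie in (0,1)), and j ∈ {0,1,…,n} is such that m_j(y) ≠ -∞, then there is a relative neighborhood of y in S̄ on which m_j is finite-valued and Lipschitz continuous. In particular, the map m := (m_0, m_1, …, m_n) is locally Lipschitz continuous on the regularity set Y. -/

import Mathlib

open Set Filter
open scoped BigOperators Topology

noncomputable section

/-- The real part of an extended-real-valued function. -/
def toR (K : ℝ → EReal) : ℝ → ℝ := fun t => (K t).toReal

/-- A *kernel function*: finite-valued, continuous and concave on `[-1,0)` and `(0,1]`,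
never `+∞`, and with coinciding one-sided limits at `0` (given by the value `K 0`). -/
structure IsKernel (K : ℝ → EReal) : Prop where
  ne_top : ∀ t, K t ≠ ⊤
  finite_left : ∀ t ∈ Ico (-1:ℝ) 0, K t ≠ ⊥
  finite_right : ∀ t ∈ Ioc (0:ℝ) 1, K t ≠ ⊥
  cont_left : ContinuousOn (toR K) (Ico (-1:ℝ) 0)
  cont_right : ContinuousOn (toR K) (Ioc (0:ℝ) 1)
  concave_left : ConcaveOn ℝ (Ico (-1:ℝ) 0) (toR K)
  concave_right : ConcaveOn ℝ (Ioc (0:ℝ) 1) (toR K)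
  tendsto_left : Tendsto K (nhdsWithin 0 (Iio 0)) (nhds (K 0))
  tendsto_right : Tendsto K (nhdsWithin 0 (Ioi 0)) (nhds (K 0))

/-- Left one-sided derivative. -/
def Dm (f : ℝ → ℝ) (t : ℝ) : ℝ := derivWithin f (Iio t) t

/-- Right one-sided derivative. -/
def Dp (f : ℝ → ℝ) (t : ℝ) : ℝ := derivWithin f (Ioi t) t

/-- Condition (PM_c): periodized `c`-monotonicity. -/
def PMcond (K : ℝ → EReal) (c : ℝ) : Prop :=
  ∀ t ∈ Ioo (0:ℝ) 1, c ≤ Dm (toR K) t - Dm (toR K) (t - 1)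

/-- An *n-field function*: bounded above, never `+∞`, finite at more than `n` points of
`[0,1]`, where the endpoints count with weight `1/2`. -/
structure IsNField (n : ℕ) (J : ℝ → EReal) : Prop where
  ne_top : ∀ t, J t ≠ ⊤
  bdd : ∃ M : ℝ, ∀ t ∈ Icc (0:ℝ) 1, J t ≤ (M : EReal)
  count : (∃ T : Finset ℝ, ↑T ⊆ {t | t ∈ Ioo (0:ℝ) 1 ∧ J t ≠ ⊥} ∧ n + 1 ≤ T.card) ∨
    ((∃ T : Finset ℝ, ↑T ⊆ {t | t ∈ Ioo (0:ℝ) 1 ∧ J t ≠ ⊥} ∧ n ≤ T.card) ∧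
      (J 0 ≠ ⊥ ∨ J 1 ≠ ⊥))

/-- The open simplex `S`. -/
def openSimplex (n : ℕ) : Set (Fin n → ℝ) :=
  {y | StrictMono y ∧ ∀ i, y i ∈ Ioo (0:ℝ) 1}

/-- The closed simplex `S̄`. -/
def closedSimplex (n : ℕ) : Set (Fin n → ℝ) :=
  {y | Monotone y ∧ ∀ i, y i ∈ Icc (0:ℝ) 1}

/-- The left endpoint `y_j` of `I_j(y)`, with the convention `y_0 = 0`. -/
def nodeLo {n : ℕ} (y : Fin n → ℝ) (j : ℕ) : ℝ :=
  if h : 0 < j ∧ j ≤ n then y ⟨j - 1, by omega⟩ else 0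

/-- The right endpoint `y_{j+1}` of `I_j(y)`, with the convention `y_{n+1} = 1`. -/
def nodeHi {n : ℕ} (y : Fin n → ℝ) (j : ℕ) : ℝ :=
  if h : j < n then y ⟨j, h⟩ else 1

/-- The interval `I_j(y) = [y_j, y_{j+1}]`. -/
def Ij {n : ℕ} (y : Fin n → ℝ) (j : ℕ) : Set ℝ := Icc (nodeLo y j) (nodeHi y j)

/-- The sum of translates function `F(y,t) = J(t) + ∑ K_j(t - y_j)`. -/
def SOT {n : ℕ} (K : Fin n → ℝ → EReal) (J : ℝ → EReal) (y : Fin n → ℝ) (t : ℝ) : EReal :=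
  J t + ∑ i, K i (t - y i)

/-- The interval maximum `m_j(y) = sup_{t ∈ I_j(y)} F(y,t)`. -/
def mj {n : ℕ} (K : Fin n → ℝ → EReal) (J : ℝ → EReal) (y : Fin n → ℝ) (j : ℕ) : EReal :=
  ⨆ t ∈ Ij y j, SOT K J y t

/-- The regularity set `Y`. -/
def regSet {n : ℕ} (K : Fin n → ℝ → EReal) (J : ℝ → EReal) : Set (Fin n → ℝ) :=
  {y ∈ openSimplex n | ∀ j ≤ n, mj K J y j ≠ ⊥}

/-- The difference function `Φ(y) = (m_1 - m_0, …, m_n - m_{n-1})`. -/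
def PhiFun {n : ℕ} (K : Fin n → ℝ → EReal) (J : ℝ → EReal) (y : Fin n → ℝ) : Fin n → ℝ :=
  fun i => (mj K J y ((i : ℕ) + 1)).toReal - (mj K J y (i : ℕ)).toReal

/-- A map between (pseudo)metric spaces is *locally bi-Lipschitz* if every point has a
neighborhood on which the map is a bi-Lipschitz homeomorphism onto its image. -/
def LocallyBiLipschitz {α β : Type*} [PseudoMetricSpace α] [PseudoMetricSpace β]
    (f : α → β) : Prop :=
  ∀ x : α, ∃ U ∈ 𝓝 x, ∃ c C : ℝ, 0 < c ∧ ∀ a ∈ U, ∀ b ∈ U,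
    c * dist a b ≤ dist (f a) (f b) ∧ dist (f a) (f b) ≤ C * dist a b

/-- The relative interior of `[a,b] ⊆ [0,1]` in the space `[0,1]`. -/
def relIntIcc (a b : ℝ) : Set ℝ :=
  (if a = 0 then Ici a else Ioi a) ∩ (if b = 1 then Iic b else Iio b)

/-- Condition `(∞₊)`. -/
def CondInfPlus (J : ℝ → EReal) : Prop :=
  J 0 = ⊥ ∧ Tendsto J (nhdsWithin 0 (Ioi 0)) (nhds ⊥)

/-- Condition `(∞₋)`. -/
def CondInfMinus (J : ℝ → EReal) : Prop :=
  J 1 = ⊥ ∧ Tendsto J (nhdsWithin 1 (Iio 1)) (nhds ⊥)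

/-- Fenton's cusp condition `(∞'₊)`. -/
def CuspPlus (J : ℝ → EReal) : Prop :=
  ∀ M : ℝ, ∃ δ > (0:ℝ), ∀ s t : ℝ, 0 ≤ s → s < t → t ≤ δ →
    J s ≠ ⊥ → J t ≠ ⊥ → M ≤ ((J t).toReal - (J s).toReal) / (t - s)

/-- Fenton's cusp condition `(∞'₋)`. -/
def CuspMinus (J : ℝ → EReal) : Prop :=
  ∀ M : ℝ, ∃ δ > (0:ℝ), ∀ t s : ℝ, 1 - δ ≤ t → t < s → s ≤ 1 →
    J s ≠ ⊥ → J t ≠ ⊥ → ((J t).toReal - (J s).toReal) / (t - s) ≤ -M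

/-- `L : [0,1] → [0,∞)` is log-concave:
`L(λs + (1-λ)t) ≥ L(s)^λ L(t)^{1-λ}`. -/
def LogConcaveOn01 (L : ℝ → ℝ) : Prop :=
  ∀ s ∈ Icc (0:ℝ) 1, ∀ t ∈ Icc (0:ℝ) 1, ∀ l ∈ Icc (0:ℝ) 1,
    L s ^ l * L t ^ (1 - l) ≤ L (l * s + (1 - l) * t)

/-!
Because the kernels are singular, `F(x, ·)` is uniformly very negative near the nodes `x i`, so
for `x` near `y` only points `t` at a fixed distance from all nodes matter for `m_j(x)`. Such a
`t` also lies in `I_j(z)` for nearby `z`, and there every kernel is concave, hence Lipschitz, so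
`F(x, t) ≤ F(z, t) + L |x - z|`; taking suprema gives `m_j(x) ≤ m_j(z) + L |x - z|`. A
near-maximiser for `m_j(y)` keeps `m_j(x)` above `m_j(y) - 2`, in particular finite.
-/

open scoped NNReal

theorem EReal.coe_finset_sum {ι : Type*} (s : Finset ι) (f : ι → ℝ) :
    ((∑ i ∈ s, f i : ℝ) : EReal) = ∑ i ∈ s, (f i : EReal) :=
  map_sum (⟨⟨(↑), EReal.coe_zero⟩, EReal.coe_add⟩ : ℝ →+ EReal) f s

theorem EReal.coe_sub_le_of_lt_add {a : EReal} {r s : ℝ} (h : (r : EReal) < a + s) :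
    ((r - s : ℝ) : EReal) ≤ a := by
  by_contra! ha
  have := EReal.add_lt_add_right_coe ha s
  rw [← EReal.coe_add, _root_.sub_add_cancel] at this
  exact this.not_gt h

theorem EReal.abs_toReal_sub_toReal_le {a b : EReal} {L : ℝ} (ha : a ≠ ⊥) (ha' : a ≠ ⊤)
    (hb : b ≠ ⊥) (hb' : b ≠ ⊤) (hab : a ≤ b + L) (hba : b ≤ a + L) :
    |a.toReal - b.toReal| ≤ L := by
  lift a to ℝ using ⟨ha', ha⟩
  lift b to ℝ using ⟨hb', hb⟩
  norm_cast at hab hba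
  simp only [EReal.toReal_coe]
  exact abs_sub_le_iff.2 ⟨by linarith, by linarith⟩

theorem exists_pos_forall_mem_Icc {ι : Type*} [Finite ι] {y : ι → ℝ}
    (hy : ∀ i, y i ∈ Ioo 0 1) : ∃ c > 0, ∀ i, y i ∈ Icc c (1 - c) := by
  have : ∀ᶠ c in 𝓝[>] (0:ℝ), ∀ i, c < y i ∧ c < 1 - y i :=
    nhdsWithin_le_nhds <| eventually_all.2 fun i =>
      (eventually_lt_nhds (hy i).1).and (eventually_lt_nhds (sub_pos.2 (hy i).2))
  obtain ⟨c, hc, hc0⟩ := (this.and self_mem_nhdsWithin).exists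
  exact ⟨c, hc0, fun i => ⟨(hc i).1.le, by linarith [(hc i).2]⟩⟩

theorem LocallyLipschitzOn.union_of_isOpen {α β : Type*} [PseudoEMetricSpace α]
    [PseudoEMetricSpace β] {f : α → β} {s t : Set α} (hs : IsOpen s) (ht : IsOpen t)
    (hfs : LocallyLipschitzOn s f) (hft : LocallyLipschitzOn t f) :
    LocallyLipschitzOn (s ∪ t) f := by
  rintro x (hx | hx)
  · obtain ⟨Λ, u, hu, hf⟩ := hfs hx
    exact ⟨Λ, u, mem_nhdsWithin_of_mem_nhds (hs.nhdsWithin_eq hx ▸ hu), hf⟩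
  · obtain ⟨Λ, u, hu, hf⟩ := hft hx
    exact ⟨Λ, u, mem_nhdsWithin_of_mem_nhds (ht.nhdsWithin_eq hx ▸ hu), hf⟩

namespace IsKernel

variable {K : ℝ → EReal}

theorem ne_bot (hK : IsKernel K) {s : ℝ} (hs : s ≠ 0) (hs1 : |s| ≤ 1) : K s ≠ ⊥ := by
  obtain ⟨h1, h2⟩ := abs_le.1 hs1
  rcases hs.lt_or_gt with h | h
  · exact hK.finite_left s ⟨h1, h⟩
  · exact hK.finite_right s ⟨h, h2⟩

theorem continuousAt_zero (hK : IsKernel K) : ContinuousAt K 0 :=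
  continuousAt_iff_continuous_left'_right'.2 ⟨hK.tendsto_left, hK.tendsto_right⟩

theorem continuousOn_Icc (hK : IsKernel K) : ContinuousOn K (Icc (-1) 1) := by
  have hcoe : ∀ {s}, ContinuousOn (toR K) s → (∀ t ∈ s, K t ≠ ⊥) → ContinuousOn K s :=
    fun hc hs => (continuous_coe_real_ereal.comp_continuousOn hc).congr fun t ht =>
      (EReal.coe_toReal (hK.ne_top t) (hs t ht)).symm
  intro s hs
  rcases lt_trichotomy s 0 with h | rfl | h
  · refine ((hcoe hK.cont_left hK.finite_left) s ⟨hs.1, h⟩).mono_of_mem_nhdsWithin ?_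
    exact mem_nhdsWithin.2 ⟨Iio 0, isOpen_Iio, h, fun t ht => ⟨ht.2.1, ht.1⟩⟩
  · exact hK.continuousAt_zero.continuousWithinAt
  · refine ((hcoe hK.cont_right hK.finite_right) s ⟨h, hs.2⟩).mono_of_mem_nhdsWithin ?_
    exact mem_nhdsWithin.2 ⟨Ioi 0, isOpen_Ioi, h, fun t ht => ⟨ht.1, ht.2.2⟩⟩

theorem exists_le (hK : IsKernel K) : ∃ C : ℝ, ∀ s ∈ Icc (-1 : ℝ) 1, K s ≤ C := by
  obtain ⟨s₀, -, hs₀⟩ :=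
    isCompact_Icc.exists_isMaxOn (nonempty_Icc.2 (by norm_num)) hK.continuousOn_Icc
  exact ⟨(K s₀).toReal, fun s hs => (hs₀ hs).trans (EReal.le_coe_toReal (hK.ne_top s₀))⟩

theorem eventually_le (hK : IsKernel K) (h0 : K 0 = ⊥) (R : ℝ) :
    ∀ᶠ η in 𝓝[>] (0:ℝ), ∀ s, |s| ≤ η → K s ≤ R := by
  have hlt : ∀ᶠ s in 𝓝 (0:ℝ), K s < R :=
    hK.continuousAt_zero.eventually_lt continuousAt_const (h0 ▸ EReal.bot_lt_coe R)
  obtain ⟨ε, hε, hεK⟩ := Metric.eventually_nhds_iff.1 hlt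
  filter_upwards [Ioo_mem_nhdsGT hε] with η hη s hs
  exact (hεK (by rw [Real.dist_eq, sub_zero]; exact hs.trans_lt hη.2)).le

theorem exists_lipschitzOnWith (hK : IsKernel K) {a b : ℝ} (ha : 0 < a) (hb : b < 1) :
    ∃ Λ, LipschitzOnWith Λ (toR K) (abs ⁻¹' Icc a b) := by
  have hloc : LocallyLipschitzOn (Ioo (-1) 0 ∪ Ioo 0 1) (toR K) := by
    refine .union_of_isOpen isOpen_Ioo isOpen_Ioo ?_ ?_
    · simpa only [interior_Ico] using hK.concave_left.locallyLipschitzOn_interior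
    · simpa only [interior_Ioc] using hK.concave_right.locallyLipschitzOn_interior
  refine (hloc.mono fun s hs => ?_).exists_lipschitzOnWith_of_compact ?_
  · rcases (abs_pos.1 (ha.trans_le hs.1)).lt_or_gt with h | h
    · exact Or.inl ⟨by linarith [abs_le.1 hs.2], h⟩
    · exact Or.inr ⟨h, by linarith [abs_le.1 hs.2]⟩
  · exact isCompact_Icc.of_isClosed_subset (isClosed_Icc.preimage continuous_abs)
      fun s hs => abs_le.1 hs.2

end IsKernel

theorem sub_mem_Icc_neg_one_one {s t : ℝ} (hs : s ∈ Icc (0:ℝ) 1) (ht : t ∈ Icc (0:ℝ) 1) :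
    t - s ∈ Icc (-1 : ℝ) 1 :=
  ⟨by linarith [hs.2, ht.1], by linarith [hs.1, ht.2]⟩

section SumOfTranslates

variable {n : ℕ} {K : Fin n → ℝ → EReal} {J : ℝ → EReal} {x z : Fin n → ℝ} {t : ℝ}

theorem Ij_subset_Icc (hx : ∀ i, x i ∈ Icc (0:ℝ) 1) (j : ℕ) : Ij x j ⊆ Icc 0 1 := by
  refine Icc_subset_Icc ?_ ?_
  · unfold nodeLo; split_ifs
    exacts [(hx _).1, le_rfl]
  · unfold nodeHi; split_ifs
    exacts [(hx _).2, le_rfl]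

theorem mem_Ij_of_abs_sub_lt {j : ℕ} (ht : t ∈ Ij x j) (h : ∀ i, |x i - z i| < |t - x i|) :
    t ∈ Ij z j := by
  obtain ⟨hlo, hhi⟩ := ht
  constructor
  · simp only [nodeLo] at hlo ⊢
    split_ifs at hlo ⊢
    · have := h ⟨j - 1, by omega⟩
      rw [abs_of_nonneg (sub_nonneg.2 hlo)] at this
      linarith [neg_abs_le (x ⟨j - 1, by omega⟩ - z ⟨j - 1, by omega⟩)]
    · exact hlo
  · simp only [nodeHi] at hhi ⊢
    split_ifs at hhi ⊢ with hj
    · have := h ⟨j, hj⟩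
      rw [abs_of_nonpos (sub_nonpos.2 hhi)] at this
      linarith [le_abs_self (x ⟨j, hj⟩ - z ⟨j, hj⟩)]
    · exact hhi

theorem SOT_le_of_le {M : ℝ} {c : Fin n → ℝ} (hJ : J t ≤ M) (hK : ∀ i, K i (t - x i) ≤ c i) :
    SOT K J x t ≤ ((M + ∑ i, c i : ℝ) : EReal) := by
  rw [EReal.coe_add, EReal.coe_finset_sum]
  exact add_le_add hJ (Finset.sum_le_sum fun i _ => hK i)

theorem SOT_eq_coe (hK : ∀ i, IsKernel (K i)) (hJ : ∀ t, J t ≠ ⊤) (hJt : J t ≠ ⊥)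
    (hKt : ∀ i, K i (t - x i) ≠ ⊥) :
    SOT K J x t = ((toR J t + ∑ i, toR (K i) (t - x i) : ℝ) : EReal) := by
  rw [EReal.coe_add, EReal.coe_finset_sum, toR, EReal.coe_toReal (hJ t) hJt]
  exact congrArg _ (Finset.sum_congr rfl fun i _ =>
    (EReal.coe_toReal ((hK i).ne_top _) (hKt i)).symm)

theorem exists_mj_le (hK : ∀ i, IsKernel (K i)) {M : ℝ} (hM : ∀ t ∈ Icc (0:ℝ) 1, J t ≤ M) :
    ∃ C : ℝ, ∀ x : Fin n → ℝ, (∀ i, x i ∈ Icc (0:ℝ) 1) → ∀ j, mj K J x j ≤ C := by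
  choose C hC using fun i => (hK i).exists_le
  refine ⟨M + ∑ i, C i, fun x hx j => iSup₂_le fun t ht => ?_⟩
  have ht01 := Ij_subset_Icc hx j ht
  exact SOT_le_of_le (hM t ht01) fun i => hC i _ (sub_mem_Icc_neg_one_one (hx i) ht01)

theorem exists_SOT_le_of_abs_sub_le (hK : ∀ i, IsKernel (K i)) (hsing : ∀ i, K i 0 = ⊥)
    {M : ℝ} (hM : ∀ t ∈ Icc (0:ℝ) 1, J t ≤ M) (R : ℝ) :
    ∃ η > 0, ∀ x : Fin n → ℝ, (∀ i, x i ∈ Icc (0:ℝ) 1) → ∀ t ∈ Icc (0:ℝ) 1,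
      ∀ i, |t - x i| ≤ η → SOT K J x t ≤ R := by
  choose C hC using fun i => (hK i).exists_le
  set r : Fin n → ℝ := fun i => R - M - ∑ i', C i' + C i
  obtain ⟨η, hηK, hη⟩ := ((eventually_all.2 fun i =>
    (hK i).eventually_le (hsing i) (r i)).and self_mem_nhdsWithin).exists
  refine ⟨η, hη, fun x hx t ht i hi => ?_⟩
  calc SOT K J x t ≤ ((M + ∑ i', Function.update C i (r i) i' : ℝ) : EReal) := by
        refine SOT_le_of_le (hM t ht) fun i' => ?_
        rcases eq_or_ne i' i with rfl | hne
        · simpa using hηK i' _ hi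
        · simpa [hne] using hC i' _ (sub_mem_Icc_neg_one_one (hx i') ht)
    _ = R := by
        rw [Finset.sum_update_of_mem (Finset.mem_univ i)]
        simp only [r, Finset.sum_eq_add_sum_sdiff_singleton_of_mem (Finset.mem_univ i) C]
        congr 1
        ring

theorem SOT_le_SOT_add (hK : ∀ i, IsKernel (K i)) (hJ : ∀ t, J t ≠ ⊤) {Λ : ℝ≥0} {a b : ℝ}
    (ha : 0 < a) (hb : b ≤ 1) (hLip : ∀ i, LipschitzOnWith Λ (toR (K i)) (abs ⁻¹' Icc a b))
    (hx : ∀ i, t - x i ∈ abs ⁻¹' Icc a b) (hz : ∀ i, t - z i ∈ abs ⁻¹' Icc a b) :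
    SOT K J x t ≤ SOT K J z t + ((n * Λ * dist x z : ℝ) : EReal) := by
  rcases eq_or_ne (J t) ⊥ with hJt | hJt
  · simp [SOT, hJt]
  have hfin : ∀ w : Fin n → ℝ, (∀ i, t - w i ∈ abs ⁻¹' Icc a b) → ∀ i, K i (t - w i) ≠ ⊥ :=
    fun w hw i => (hK i).ne_bot (abs_pos.1 (ha.trans_le (hw i).1)) ((hw i).2.trans hb)
  rw [SOT_eq_coe hK hJ hJt (hfin x hx), SOT_eq_coe hK hJ hJt (hfin z hz), ← EReal.coe_add,
    EReal.coe_le_coe_iff]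
  have hterm : ∀ i, toR (K i) (t - x i) ≤ toR (K i) (t - z i) + Λ * dist x z := by
    intro i
    have hd : dist (t - x i) (t - z i) ≤ dist x z := by
      rw [dist_sub_left]; exact dist_le_pi_dist x z i
    have hLi := (hLip i).dist_le_mul _ (hx i) _ (hz i)
    rw [Real.dist_eq] at hLi
    linarith [le_abs_self (toR (K i) (t - x i) - toR (K i) (t - z i)),
      mul_le_mul_of_nonneg_left hd Λ.coe_nonneg]
  have := Finset.sum_le_sum fun i (_ : i ∈ Finset.univ) => hterm i
  rw [Finset.sum_add_distrib, Finset.sum_const, Finset.card_univ, Fintype.card_fin,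
    nsmul_eq_mul] at this
  linarith

theorem SOT_le_mj_add (hK : ∀ i, IsKernel (K i)) (hJ : ∀ t, J t ≠ ⊤) {Λ : ℝ≥0} {η c : ℝ}
    (hη : 0 < η) (hc : 0 ≤ c)
    (hLip : ∀ i, LipschitzOnWith Λ (toR (K i)) (abs ⁻¹' Icc (η / 2) (1 - c)))
    (hx : ∀ i, x i ∈ Icc c (1 - c)) (hz : ∀ i, z i ∈ Icc c (1 - c))
    (hxz : ∀ i, |x i - z i| ≤ η / 2) {j : ℕ} (ht : t ∈ Ij x j) (hfar : ∀ i, η < |t - x i|) :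
    SOT K J x t ≤ mj K J z j + ((n * Λ * dist x z : ℝ) : EReal) := by
  have ht01 := Ij_subset_Icc (fun i => ⟨hc.trans (hx i).1, by linarith [(hx i).2]⟩) j ht
  have hnear : ∀ w : Fin n → ℝ, (∀ i, w i ∈ Icc c (1 - c)) → ∀ i, |t - w i| ≤ 1 - c :=
    fun w hw i => abs_sub_le_iff.2 ⟨by linarith [(hw i).1, ht01.2], by linarith [(hw i).2, ht01.1]⟩
  have hfarz : ∀ i, η / 2 ≤ |t - z i| := fun i => by
    linarith [abs_sub_le t (z i) (x i), abs_sub_comm (z i) (x i), hxz i, hfar i]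
  calc SOT K J x t ≤ SOT K J z t + ((n * Λ * dist x z : ℝ) : EReal) :=
        SOT_le_SOT_add hK hJ (half_pos hη) (by linarith) hLip
          (fun i => ⟨by linarith [hfar i], hnear x hx i⟩) (fun i => ⟨hfarz i, hnear z hz i⟩)
    _ ≤ mj K J z j + ((n * Λ * dist x z : ℝ) : EReal) := by
        gcongr
        exact le_iSup₂ (f := fun t _ => SOT K J z t) t
          (mem_Ij_of_abs_sub_lt ht fun i => by linarith [hxz i, hfar i])

theorem mj_le_mj_add (hK : ∀ i, IsKernel (K i)) (hJ : ∀ t, J t ≠ ⊤) {Λ : ℝ≥0} {η c R : ℝ}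
    (hη : 0 < η) (hc : 0 ≤ c)
    (hLip : ∀ i, LipschitzOnWith Λ (toR (K i)) (abs ⁻¹' Icc (η / 2) (1 - c)))
    (hx : ∀ i, x i ∈ Icc c (1 - c)) (hz : ∀ i, z i ∈ Icc c (1 - c))
    (hxz : ∀ i, |x i - z i| ≤ η / 2)
    (hsmall : ∀ t ∈ Icc (0:ℝ) 1, ∀ i, |t - x i| ≤ η → SOT K J x t ≤ R) {j : ℕ}
    (hR : (R : EReal) ≤ mj K J z j) :
    mj K J x j ≤ mj K J z j + ((n * Λ * dist x z : ℝ) : EReal) := by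
  refine iSup₂_le fun t ht => ?_
  by_cases hfar : ∀ i, η < |t - x i|
  · exact SOT_le_mj_add hK hJ hη hc hLip hx hz hxz ht hfar
  obtain ⟨i, hi⟩ := not_forall.1 hfar
  have ht01 := Ij_subset_Icc (fun i => ⟨hc.trans (hx i).1, by linarith [(hx i).2]⟩) j ht
  calc SOT K J x t ≤ R := hsmall t ht01 i (not_lt.1 hi)
    _ ≤ mj K J z j := hR
    _ ≤ mj K J z j + ((n * Λ * dist x z : ℝ) : EReal) :=
        le_add_of_nonneg_right (EReal.coe_nonneg.2 (by positivity))

theorem exists_far_lt_SOT {y : Fin n → ℝ} (hy : ∀ i, y i ∈ Icc (0:ℝ) 1) {η R r : ℝ} {j : ℕ}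
    (hsmall : ∀ t ∈ Icc (0:ℝ) 1, ∀ i, |t - y i| ≤ η → SOT K J y t ≤ R) (hRr : R ≤ r)
    (hr : (r : EReal) < mj K J y j) :
    ∃ t ∈ Ij y j, (r : EReal) < SOT K J y t ∧ ∀ i, η < |t - y i| := by
  obtain ⟨t, ht, hrt⟩ := lt_biSup_iff.1 hr
  refine ⟨t, ht, hrt, fun i => not_le.1 fun hi => ?_⟩
  exact (hrt.trans_le (hsmall t (Ij_subset_Icc hy j ht) i hi)).not_ge (EReal.coe_le_coe_iff.2 hRr)

theorem exists_lipschitzOnWith_annulus (hK : ∀ i, IsKernel (K i)) {a b : ℝ} (ha : 0 < a)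
    (hb : b < 1) : ∃ Λ, ∀ i, LipschitzOnWith Λ (toR (K i)) (abs ⁻¹' Icc a b) := by
  choose Λ hΛ using fun i => (hK i).exists_lipschitzOnWith ha hb
  exact ⟨Finset.univ.sup Λ, fun i => (hΛ i).weaken (Finset.le_sup (Finset.mem_univ i))⟩

end SumOfTranslates

theorem exists_lipschitz_mj_of_far_point {n : ℕ} {K : Fin n → ℝ → EReal} {J : ℝ → EReal}
    (hK : ∀ i, IsKernel (K i)) (hJ : ∀ t, J t ≠ ⊤) {y : Fin n → ℝ} {c η R : ℝ} {Λ : ℝ≥0}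
    {j : ℕ} {ts : ℝ} (hc : 0 < c) (hyc : ∀ i, y i ∈ Icc c (1 - c)) (hη : 0 < η)
    (hLip : ∀ i, LipschitzOnWith Λ (toR (K i)) (abs ⁻¹' Icc (η / 2) (1 - c / 2)))
    (hsmall : ∀ x : Fin n → ℝ, (∀ i, x i ∈ Icc (0:ℝ) 1) → ∀ t ∈ Icc (0:ℝ) 1,
      ∀ i, |t - x i| ≤ η → SOT K J x t ≤ R)
    (hts : ts ∈ Ij y j) (hFts : ((R + 1 : ℝ) : EReal) < SOT K J y ts)
    (hfar : ∀ i, η < |ts - y i|)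
    (htop : ∀ x : Fin n → ℝ, (∀ i, x i ∈ Icc (0:ℝ) 1) → mj K J x j ≠ ⊤) :
    ∃ δ > 0, ∀ x : Fin n → ℝ, dist x y ≤ δ → (mj K J x j ≠ ⊥ ∧ mj K J x j ≠ ⊤) ∧
      ∀ z : Fin n → ℝ, dist z y ≤ δ →
        |(mj K J x j).toReal - (mj K J z j).toReal| ≤ n * Λ * dist x z := by
  set L := (n * Λ : ℝ)
  -- `δ ≤ η / 4` keeps nearby points `η / 2`-close to each other, `δ ≤ c / 2` keeps their
  -- coordinates in `[c / 2, 1 - c / 2]`, and `L * δ ≤ 1 / 2` keeps `F(x, ts) > R`.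
  set δ := min (min (η / 4) (c / 2)) (1 / (2 * (L + 1)))
  have hL : 0 ≤ L := by positivity
  have hδ : 0 < δ := by positivity
  have hLδ : L * δ ≤ 1 / 2 := by
    calc L * δ ≤ (L + 1) * (1 / (2 * (L + 1))) :=
          mul_le_mul (by linarith) (min_le_right _ _) hδ.le (by linarith)
      _ = 1 / 2 := by field_simp
  have hnear : ∀ x : Fin n → ℝ, dist x y ≤ δ →
      ∀ i, |x i - y i| ≤ η / 4 ∧ x i ∈ Icc (c / 2) (1 - c / 2) := fun x hxy i => by
    have := abs_le.1 ((Real.dist_eq _ _ ▸ dist_le_pi_dist x y i).trans hxy)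
    have : δ ≤ η / 4 := (min_le_left _ _).trans (min_le_left _ _)
    have : δ ≤ c / 2 := (min_le_left _ _).trans (min_le_right _ _)
    exact ⟨abs_le.2 ⟨by linarith, by linarith⟩, by linarith [(hyc i).1], by linarith [(hyc i).2]⟩
  have hcube : ∀ x : Fin n → ℝ, dist x y ≤ δ → ∀ i, x i ∈ Icc (0:ℝ) 1 := fun x hxy i =>
    ⟨by linarith [(hnear x hxy i).2.1], by linarith [(hnear x hxy i).2.2]⟩
  have hlower : ∀ x : Fin n → ℝ, dist x y ≤ δ → (R : EReal) ≤ mj K J x j := by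
    intro x hxy
    have hyx : ∀ i, |y i - x i| ≤ η / 2 := fun i => by
      rw [abs_sub_comm]; linarith [(hnear x hxy i).1]
    have := EReal.coe_sub_le_of_lt_add (hFts.trans_le (SOT_le_mj_add hK hJ hη (by linarith)
      hLip (fun i => (hnear y (by simpa using hδ.le) i).2) (fun i => (hnear x hxy i).2) hyx
      hts hfar))
    have hLd : L * dist y x ≤ 1 / 2 :=
      (mul_le_mul_of_nonneg_left (dist_comm y x ▸ hxy) hL).trans hLδ
    exact (EReal.coe_le_coe_iff.2 (by linarith)).trans this
  have hupper : ∀ x z : Fin n → ℝ, dist x y ≤ δ → dist z y ≤ δ →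
      mj K J x j ≤ mj K J z j + ((L * dist x z : ℝ) : EReal) := fun x z hxy hzy =>
    mj_le_mj_add hK hJ hη (by linarith) hLip (fun i => (hnear x hxy i).2)
      (fun i => (hnear z hzy i).2)
      (fun i => by linarith [abs_sub_le (x i) (y i) (z i), abs_sub_comm (y i) (z i),
        (hnear x hxy i).1, (hnear z hzy i).1])
      (hsmall x (hcube x hxy)) (hlower z hzy)
  have hbot : ∀ x : Fin n → ℝ, dist x y ≤ δ → mj K J x j ≠ ⊥ :=
    fun x hxy => ne_bot_of_le_ne_bot (EReal.coe_ne_bot _) (hlower x hxy)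
  refine ⟨δ, hδ, fun x hxy => ⟨⟨hbot x hxy, htop x (hcube x hxy)⟩, fun z hzy => ?_⟩⟩
  exact EReal.abs_toReal_sub_toReal_le (hbot x hxy) (htop x (hcube x hxy)) (hbot z hzy)
    (htop z (hcube z hzy)) (hupper x z hxy hzy) (dist_comm x z ▸ hupper z x hzy hxy)

theorem exists_lipschitz_mj {n : ℕ} {K : Fin n → ℝ → EReal} {J : ℝ → EReal}
    (hK : ∀ i, IsKernel (K i)) (hsing : ∀ i, K i 0 = ⊥) (hJ : ∀ t, J t ≠ ⊤)
    (hJbdd : ∃ M : ℝ, ∀ t ∈ Icc (0:ℝ) 1, J t ≤ M) {y : Fin n → ℝ} (hy : ∀ i, y i ∈ Ioo 0 1)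
    {j : ℕ} (hmj : mj K J y j ≠ ⊥) :
    ∃ δ > 0, ∃ L : ℝ, ∀ x : Fin n → ℝ, dist x y ≤ δ →
      (mj K J x j ≠ ⊥ ∧ mj K J x j ≠ ⊤) ∧ ∀ z : Fin n → ℝ, dist z y ≤ δ →
        |(mj K J x j).toReal - (mj K J z j).toReal| ≤ L * dist x z := by
  obtain ⟨M, hM⟩ := hJbdd
  obtain ⟨C, hC⟩ := exists_mj_le hK hM
  have htop : ∀ x : Fin n → ℝ, (∀ i, x i ∈ Icc (0:ℝ) 1) → mj K J x j ≠ ⊤ :=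
    fun x hx => ne_top_of_le_ne_top (EReal.coe_ne_top C) (hC x hx j)
  have hy01 : ∀ i, y i ∈ Icc (0:ℝ) 1 := fun i => Ioo_subset_Icc_self (hy i)
  set m := (mj K J y j).toReal
  obtain ⟨η, hη, hsmall⟩ := exists_SOT_le_of_abs_sub_le hK hsing hM (m - 2)
  obtain ⟨ts, hts, hFts, hfar⟩ := exists_far_lt_SOT hy01 (hsmall y hy01)
    (le_add_of_nonneg_right zero_le_one) <| by
    rw [← EReal.coe_toReal (htop y hy01) hmj]; exact EReal.coe_lt_coe_iff.2 (by linarith)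
  obtain ⟨c, hc, hyc⟩ := exists_pos_forall_mem_Icc hy
  obtain ⟨Λ, hΛ⟩ := exists_lipschitzOnWith_annulus hK (half_pos hη) (by linarith : 1 - c / 2 < 1)
  obtain ⟨δ, hδ, h⟩ := exists_lipschitz_mj_of_far_point hK hJ hc hyc hη hΛ hsmall hts hFts
    hfar htop
  exact ⟨δ, hδ, _, h⟩

/-- (Proposition 5.1 / `prop:Lipschitz`.) For singular kernels and an
arbitrary `n`-field function: if `y ∈ S̄` has all coordinates in `(0,1)` and
`m_j(y) ≠ -∞`, then `m_j` is finite-valued and Lipschitz continuous on a suitable relative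
neighborhood of `y` in `S̄`; in particular `m = (m_0,…,m_n)` is locally Lipschitz on the
regularity set `Y`. -/
theorem interval_maxima_locally_Lipschitz
    {n : ℕ} (hn : 1 ≤ n) (K : Fin n → ℝ → EReal) (J : ℝ → EReal)
    (hK : ∀ i, IsKernel (K i)) (hsing : ∀ i, K i 0 = ⊥) (hJ : IsNField n J) :
    (∀ y ∈ closedSimplex n, 0 < y ⟨0, by omega⟩ → y ⟨n - 1, by omega⟩ < 1 →
      ∀ j ≤ n, mj K J y j ≠ ⊥ →
        ∃ δ > (0:ℝ), ∃ L : ℝ,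
          ∀ x ∈ closedSimplex n, dist x y ≤ δ →
            (mj K J x j ≠ ⊥ ∧ mj K J x j ≠ ⊤) ∧
            ∀ z ∈ closedSimplex n, dist z y ≤ δ →
              |(mj K J x j).toReal - (mj K J z j).toReal| ≤ L * dist x z) ∧
    (∀ y ∈ regSet K J, ∃ δ > (0:ℝ), ∃ L : ℝ,
        ∀ x ∈ regSet K J, dist x y ≤ δ → ∀ z ∈ regSet K J, dist z y ≤ δ →
          ∀ j ≤ n, |(mj K J x j).toReal - (mj K J z j).toReal| ≤ L * dist x z) := by
  refine ⟨fun y hy hy0 hy1 j _ hmj => ?_, fun y hy => ?_⟩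
  · have hy01 : ∀ i, y i ∈ Ioo 0 1 := fun i =>
      ⟨hy0.trans_le (hy.1 (Nat.zero_le i)), (hy.1 (Nat.le_sub_one_of_lt i.2)).trans_lt hy1⟩
    obtain ⟨δ, hδ, L, h⟩ := exists_lipschitz_mj hK hsing hJ.ne_top hJ.bdd hy01 hmj
    exact ⟨δ, hδ, L, fun x _ hxy => ⟨(h x hxy).1, fun z _ hzy => (h x hxy).2 z hzy⟩⟩
  · choose δ hδ L hL using fun j : Fin (n + 1) => exists_lipschitz_mj hK hsing hJ.ne_top hJ.bdd
      hy.1.2 (hy.2 j j.is_le)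
    refine ⟨Finset.univ.inf' Finset.univ_nonempty δ, (Finset.lt_inf'_iff _).2 fun j _ => hδ j,
      Finset.univ.sup' Finset.univ_nonempty L, fun x _ hxy z _ hzy j hj => ?_⟩
    have hδj := Finset.inf'_le δ (Finset.mem_univ (⟨j, by omega⟩ : Fin (n + 1)))
    calc _ ≤ L ⟨j, by omega⟩ * dist x z := ((hL _ x (hxy.trans hδj)).2 z (hzy.trans hδj))
      _ ≤ _ := mul_le_mul_of_nonneg_right (Finset.le_sup' L (Finset.mem_univ _)) dist_nonneg

end
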